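/- Let π be a Weil q-number of weight 1 such that ℚ(π) has a non-real complex embedding. Then β := π + q/π is a totally real algebraic integer, and π is a root of T² - βT + q where ψ(β² - 4q) < 0 for every embedding ψ of ℚ(β) into ℝ. -/

import Mathlib

/-!
For every conjugate `w` of `π` we have `|w| = √q`, hence `q / w = conj w`. Every conjugate of
`β = π + q/π` is the image of `β` under an embedding of `ℚ(π)`, so it is `w + q/w = 2 Re w` for a
conjugate `w` of `π`, and `(2 Re w)² - 4q = -4 (Im w)²`. This is negative because no conjugate of
`π` is real: a real one would satisfy `w² = q`, so the minimal polynomial of `π` would divide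
`X² - q`, whose roots are real, contradicting the existence of a non-real conjugate.
-/

open Polynomial IntermediateField ComplexConjugate

namespace Complex

lemma normSq_eq_of_norm_eq_sqrt {r : ℝ} (hr : 0 ≤ r) {w : ℂ} (hw : ‖w‖ = √r) :
    normSq w = r := by
  rw [normSq_eq_norm_sq, hw, Real.sq_sqrt hr]

lemma div_eq_conj_of_norm_eq_sqrt {r : ℝ} (hr : 0 ≤ r) {w : ℂ} (hw : ‖w‖ = √r) :
    (r : ℂ) / w = conj w := by
  rw [div_eq_mul_inv, inv_def, normSq_eq_of_norm_eq_sqrt hr hw]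
  rcases hr.eq_or_lt with rfl | hr
  · simp_all
  · rw [mul_left_comm, ← ofReal_mul, mul_inv_cancel₀ hr.ne', ofReal_one, mul_one]

lemma im_eq_zero_of_sq_eq_ofReal {r : ℝ} (hr : 0 ≤ r) {z : ℂ} (hz : z ^ 2 = r) : z.im = 0 := by
  have hre := congrArg re hz
  have him := congrArg im hz
  simp only [sq, mul_re, mul_im, ofReal_re, ofReal_im] at hre him
  rcases mul_eq_zero.mp (show z.re * z.im = 0 by linarith) with h | h
  · nlinarith
  · exact h

end Complex

lemma IntermediateField.exists_algHom_apply_eq_of_aeval_minpoly_eq_zero {F E A : Type*} [Field F]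
    [Field E] [Field A] [IsAlgClosed A] [Algebra F E] [Algebra F A] {K : IntermediateField F E}
    [Algebra.IsAlgebraic F K] (x : K) {z : A} (hz : aeval z (minpoly F (x : E)) = 0) :
    ∃ ψ : K →ₐ[F] A, ψ x = z := by
  rw [← minpoly_eq] at hz
  exact (Algebra.IsAlgebraic.range_eval_eq_rootSet_minpoly A x).symm.subset
    ((minpoly.monic (Algebra.IsIntegral.isIntegral x)).mem_rootSet.mpr hz)

lemma exists_aeval_minpoly_eq_zero_and_eq_add_div {F A : Type*} [Field F] [Field A]
    [IsAlgClosed A] [Algebra F A] {α : A} (hα : IsIntegral F α) (c : F) {z : A}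
    (hz : aeval z (minpoly F (α + algebraMap F A c / α)) = 0) :
    ∃ w : A, aeval w (minpoly F α) = 0 ∧ z = w + algebraMap F A c / w := by
  have : FiniteDimensional F F⟮α⟯ := adjoin.finiteDimensional hα
  obtain ⟨ψ, rfl⟩ := exists_algHom_apply_eq_of_aeval_minpoly_eq_zero
    (AdjoinSimple.gen F α + algebraMap F F⟮α⟯ c / AdjoinSimple.gen F α) hz
  refine ⟨ψ (AdjoinSimple.gen F α), ?_, by simp⟩
  rw [aeval_algHom_apply, aeval_gen_minpoly, map_zero]

lemma im_ne_zero_of_aeval_minpoly_eq_zero {α : ℂ} (hα : IsIntegral ℚ α) {r : ℚ} (hr : 0 ≤ r)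
    (habs : ∀ z : ℂ, aeval z (minpoly ℚ α) = 0 → ‖z‖ = √r)
    (hnonreal : ∃ z : ℂ, aeval z (minpoly ℚ α) = 0 ∧ z.im ≠ 0)
    {w : ℂ} (hw : aeval w (minpoly ℚ α) = 0) : w.im ≠ 0 := by
  intro hw_real
  obtain ⟨z, hz, hz_im⟩ := hnonreal
  have hr' : (0 : ℝ) ≤ r := by exact_mod_cast hr
  have hw_sq : w ^ 2 = ((r : ℝ) : ℂ) := by
    rw [← Complex.normSq_eq_of_norm_eq_sqrt hr' (habs w hw), ← Complex.mul_conj,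
      Complex.conj_eq_iff_im.mpr hw_real, sq]
  have hdvd : minpoly ℚ α ∣ X ^ 2 - C r := by
    rw [minpoly.eq_of_irreducible_of_monic (minpoly.irreducible hα) hw (minpoly.monic hα)]
    exact minpoly.dvd ℚ w (by simp [hw_sq])
  have hz_sq : z ^ 2 = ((r : ℝ) : ℂ) := by
    obtain ⟨p, hp⟩ := hdvd
    have := congrArg (aeval z) hp
    rw [map_mul, hz, zero_mul] at this
    simpa [sub_eq_zero] using this
  exact hz_im (Complex.im_eq_zero_of_sq_eq_ofReal hr' hz_sq)

theorem stmt2_general (q : ℕ) (π : ℂ) (hπ0 : π ≠ 0)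
    (hint : IsIntegral ℤ π)
    (habs : ∀ z : ℂ, Polynomial.aeval z (minpoly ℚ π) = 0 → ‖z‖ = Real.sqrt q)
    (hnonreal : ∃ z : ℂ, Polynomial.aeval z (minpoly ℚ π) = 0 ∧ z.im ≠ 0) :
    IsIntegral ℤ (π + (q : ℂ) / π) ∧
    (∀ z : ℂ, Polynomial.aeval z (minpoly ℚ (π + (q : ℂ) / π)) = 0 → z.im = 0) ∧
    (π ^ 2 - (π + (q : ℂ) / π) * π + (q : ℂ) = 0) ∧
    (∀ x : ℝ, Polynomial.aeval (x : ℂ) (minpoly ℚ (π + (q : ℂ) / π)) = 0 →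
      x ^ 2 - 4 * (q : ℝ) < 0) := by
  have hπ : IsIntegral ℚ π := hint.tower_top
  have hdiv_conj : ∀ w : ℂ, aeval w (minpoly ℚ π) = 0 → (q : ℂ) / w = conj w := fun w hw ↦
    mod_cast Complex.div_eq_conj_of_norm_eq_sqrt q.cast_nonneg (habs w hw)
  have hconj : ∀ z : ℂ, aeval z (minpoly ℚ (π + (q : ℂ) / π)) = 0 →
      ∃ w : ℂ, aeval w (minpoly ℚ π) = 0 ∧ z = w + conj w := by
    intro z hz
    obtain ⟨w, hw, rfl⟩ := exists_aeval_minpoly_eq_zero_and_eq_add_div hπ (q : ℚ)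
      (by simpa using hz)
    exact ⟨w, hw, by simp [hdiv_conj w hw]⟩
  refine ⟨?_, ?_, by field_simp; ring, ?_⟩
  · rw [hdiv_conj π (minpoly.aeval ℚ π)]
    exact hint.add (hint.map (starRingEnd ℂ).toIntAlgHom)
  · intro z hz
    obtain ⟨w, -, rfl⟩ := hconj z hz
    simp
  · intro x hx
    obtain ⟨w, hw, hxw⟩ := hconj x hx
    have hx_re : x = 2 * w.re := by simpa [two_mul] using congrArg Complex.re hxw
    have hw_normSq : w.re ^ 2 + w.im ^ 2 = q := by
      rw [← Complex.normSq_eq_of_norm_eq_sqrt q.cast_nonneg (habs w hw), Complex.normSq_apply]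
      ring
    have hw_im : w.im ≠ 0 := im_ne_zero_of_aeval_minpoly_eq_zero hπ q.cast_nonneg
      (by simpa using habs) hnonreal hw
    rw [hx_re, ← hw_normSq]
    nlinarith [sq_pos_of_ne_zero hw_im]

/-- If `π` is a Weil `q`-number of weight 1 such that `ℚ(π)` has a non-real complex
embedding (equivalently, some conjugate of `π` is non-real), then `β := π + q/π` is a
totally real algebraic integer, `π` is a root of `T² - βT + q`, and `ψ(β² - 4q) < 0` for
every embedding `ψ : ℚ(β) → ℝ` (equivalently, every real conjugate `x` of `β` has
`x² - 4q < 0`). -/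
theorem stmt2 (q : ℕ) (hq : IsPrimePow q) (π : ℂ) (hπ0 : π ≠ 0)
    (hint : IsIntegral ℤ π)
    (habs : ∀ z : ℂ, Polynomial.aeval z (minpoly ℚ π) = 0 → ‖z‖ = Real.sqrt q)
    (hnonreal : ∃ z : ℂ, Polynomial.aeval z (minpoly ℚ π) = 0 ∧ z.im ≠ 0) :
    IsIntegral ℤ (π + (q : ℂ) / π) ∧
    (∀ z : ℂ, Polynomial.aeval z (minpoly ℚ (π + (q : ℂ) / π)) = 0 → z.im = 0) ∧
    (π ^ 2 - (π + (q : ℂ) / π) * π + (q : ℂ) = 0) ∧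
    (∀ x : ℝ, Polynomial.aeval (x : ℂ) (minpoly ℚ (π + (q : ℂ) / π)) = 0 →
      x ^ 2 - 4 * (q : ℝ) < 0) :=
  stmt2_general q π hπ0 hint habs hnonreal
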